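/- Sphere-packing bound: if C ⊆ S_{n,q} is a code with minimum deletion distance d(C) ≥ 2t+1 (i.e., any two distinct codewords are at deletion distance at least 2t+1), then |C| ≤ binomial(n+q-1, q-1) / binomial(t+q-1, q-1). -/

import Mathlib

/-!
Balls of radius `t` around the codewords are pairwise disjoint subsets of `S_{n,q}`, because
on a fixed simplex `delDist` is symmetric and satisfies the triangle inequality. Each ball
contains a translate of `S_{t,q}`: write the centre as `(x - r) + r` with `r ≤ x` of mass `t`
and replace `r` by an arbitrary point of `S_{t,q}`. Counting gives
`|C| · |S_{t,q}| ≤ |S_{n,q}|`, and stars and bars evaluates both simplices.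
-/

def simplex (n q : ℕ) : Finset (Fin q → ℕ) := Finset.Nat.antidiagonalTuple q n

def delDist {q : ℕ} (x y : Fin q → ℕ) : ℕ := ∑ i, (x i - y i)

def ball (n q r : ℕ) (x : Fin q → ℕ) : Finset (Fin q → ℕ) :=
  (simplex n q).filter (fun y => delDist x y ≤ r)

open Finset

lemma mem_simplex {n q : ℕ} {x : Fin q → ℕ} : x ∈ simplex n q ↔ ∑ i, x i = n :=
  Nat.mem_antidiagonalTuple

lemma mem_ball {n q r : ℕ} {x y : Fin q → ℕ} :
    y ∈ ball n q r x ↔ y ∈ simplex n q ∧ delDist x y ≤ r :=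
  mem_filter

lemma card_simplex (n : ℕ) {q : ℕ} (hq : 1 ≤ q) : #(simplex n q) = (n + q - 1).choose (q - 1) := by
  have e : simplex n q ≃ Sym (Fin q) n :=
    (Equiv.subtypeEquivRight fun _ => mem_simplex).trans (Sym.equivNatSumOfFintype (Fin q) n).symm
  obtain ⟨m, rfl⟩ : ∃ m, q = m + 1 := ⟨q - 1, by omega⟩
  rw [card_eq_of_equiv_fintype e, Sym.card_sym_eq_choose, Fintype.card_fin,
    show m + 1 + n - 1 = n + m by omega, show n + (m + 1) - 1 = n + m by omega,
    Nat.add_sub_cancel, Nat.choose_symm_add]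

lemma delDist_add_sum_eq {q : ℕ} (x y : Fin q → ℕ) :
    delDist x y + ∑ i, y i = delDist y x + ∑ i, x i := by
  -- termwise, both sides are `max (x i) (y i)`
  simp only [delDist, ← sum_add_distrib]
  exact sum_congr rfl fun i _ => by omega

lemma delDist_comm_of_sum_eq {q : ℕ} {x y : Fin q → ℕ} (h : ∑ i, x i = ∑ i, y i) :
    delDist x y = delDist y x := by
  have := delDist_add_sum_eq x y
  omega

lemma delDist_le_add {q : ℕ} (x y z : Fin q → ℕ) :
    delDist x z ≤ delDist x y + delDist y z := by
  simp only [delDist, ← sum_add_distrib]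
  exact sum_le_sum fun _ _ => tsub_le_tsub_add_tsub

lemma disjoint_ball_of_lt_delDist {n q r : ℕ} {x y : Fin q → ℕ} (hy : y ∈ simplex n q)
    (hxy : 2 * r < delDist x y) : Disjoint (ball n q r x) (ball n q r y) := by
  refine disjoint_left.2 fun z hzx hzy => ?_
  obtain ⟨hz, hxz⟩ := mem_ball.1 hzx
  have hyz := (mem_ball.1 hzy).2
  have hzy : delDist z y = delDist y z :=
    delDist_comm_of_sum_eq ((mem_simplex.1 hz).trans (mem_simplex.1 hy).symm)
  have := delDist_le_add x z y
  omega

lemma exists_le_sum_eq {ι : Type*} [Fintype ι] (x : ι → ℕ) {t : ℕ} (ht : t ≤ ∑ i, x i) :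
    ∃ r ≤ x, ∑ i, r i = t := by
  induction t with
  | zero => exact ⟨0, fun _ => Nat.zero_le _, by simp⟩
  | succ t ih =>
    obtain ⟨r, hrx, hr⟩ := ih (by omega)
    obtain ⟨i, hi⟩ : ∃ i, r i < x i := by
      by_contra! h
      have : ∑ i, x i ≤ ∑ i, r i := sum_le_sum fun i _ => h i
      omega
    classical
    refine ⟨Function.update r i (r i + 1), fun j => ?_, ?_⟩
    · rcases eq_or_ne j i with rfl | hj
      · simpa using hi
      · simpa [hj] using hrx j
    · rw [sum_update_of_mem (mem_univ i), ← hr, ← add_sum_erase _ _ (mem_univ i),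
        sdiff_singleton_eq_erase]
      ring

lemma card_simplex_le_card_ball {n q t : ℕ} (ht : t ≤ n) {x : Fin q → ℕ}
    (hx : x ∈ simplex n q) : #(simplex t q) ≤ #(ball n q t x) := by
  obtain ⟨r, hrx, hr⟩ := exists_le_sum_eq x (ht.trans (mem_simplex.1 hx).ge)
  have hxr : ∑ i, (x - r) i = n - t := by
    rw [Pi.sub_def, sum_tsub_distrib _ fun i _ => hrx i, hr, mem_simplex.1 hx]
  rw [← card_map (addLeftEmbedding (x - r))]
  refine card_le_card fun y hy => ?_
  obtain ⟨δ, hδ, rfl⟩ := mem_map.1 hy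
  refine mem_ball.2 ⟨mem_simplex.2 ?_, ?_⟩
  · simp only [addLeftEmbedding_apply, Pi.add_apply, sum_add_distrib, hxr, mem_simplex.1 hδ]
    omega
  · calc delDist x (x - r + δ) ≤ ∑ i, r i :=
          sum_le_sum fun i _ => by simp only [Pi.add_apply, Pi.sub_apply]; omega
      _ = t := hr

lemma card_mul_le_card_of_pairwiseDisjoint {ι α : Type*} [DecidableEq α] {C : Finset ι}
    {B : ι → Finset α} {U : Finset α} {b : ℕ} (hdisj : (C : Set ι).PairwiseDisjoint B)
    (hBU : ∀ c ∈ C, B c ⊆ U) (hb : ∀ c ∈ C, b ≤ #(B c)) : #C * b ≤ #U :=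
  calc #C * b ≤ ∑ c ∈ C, #(B c) := by simpa using card_nsmul_le_sum C _ b hb
    _ = #(C.biUnion B) := (card_biUnion hdisj).symm
    _ ≤ #U := card_le_card (biUnion_subset.2 hBU)

/-- Sphere-packing bound: a code in `S_{n,q}` with minimum deletion distance at
least `2t+1` has size at most `binomial(n+q-1,q-1) / binomial(t+q-1,q-1)`. -/
theorem sphere_packing_bound (n q t : ℕ) (hq : 1 ≤ q) (ht : t ≤ n)
    (C : Finset (Fin q → ℕ)) (hC : C ⊆ simplex n q)
    (hdist : ∀ S ∈ C, ∀ T ∈ C, S ≠ T → 2 * t + 1 ≤ delDist S T) :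
    (C.card : ℚ) ≤ ((n + q - 1).choose (q - 1) : ℚ) / ((t + q - 1).choose (q - 1) : ℚ) := by
  have hdisj : (C : Set (Fin q → ℕ)).PairwiseDisjoint (ball n q t) := fun S hS T hT hST =>
    disjoint_ball_of_lt_delDist (hC hT) (hdist S hS T hT hST)
  have hcount : #C * #(simplex t q) ≤ #(simplex n q) :=
    card_mul_le_card_of_pairwiseDisjoint hdisj (fun _ _ => filter_subset _ _)
      fun _ hS => card_simplex_le_card_ball ht (hC hS)
  rw [card_simplex n hq, card_simplex t hq] at hcount
  rw [le_div_iff₀ (by exact_mod_cast Nat.choose_pos (by omega))]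
  exact_mod_cast hcount
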